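/- For all natural n ≥ 1, c - ỹ_{n+1} ∈ [1 - 3c/2, c/2]. -/

import Mathlib

noncomputable def c : ℝ := 4 / (9 - Real.sqrt 5)
noncomputable def φ : ℝ := (1 + Real.sqrt 5) / 2

/-! With `ψ = (1 - √5)/2 = -φ⁻¹` the forcing term is `c φ ψⁿ / 2`, and since `1 - φ = ψ` the
recurrence telescopes to `c - ỹₙ₊₁ = c (ψⁿ⁺¹ - ψ) / 2`. For `-1 ≤ ψ ≤ 0` and `n + 1 ≥ 2` the power
`ψⁿ⁺¹` lies between `ψ³` and `ψ²`; by `ψ² = ψ + 1` the upper end gives `c / 2`, and the lower end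
gives `c (ψ + 1) / 2`, which equals `1 - 3c/2` because `c = 2 / (4 + ψ)`. -/

open Real

lemma pow_mem_Icc_of_neg_one_le_of_nonpos {R : Type*} [CommRing R] [LinearOrder R]
    [IsStrictOrderedRing R] {r : R} (hr₁ : -1 ≤ r) (hr₀ : r ≤ 0) {m : ℕ} (hm : 2 ≤ m) :
    r ^ m ∈ Set.Icc (r ^ 3) (r ^ 2) := by
  induction m, hm using Nat.le_induction with
  | base => exact ⟨by nlinarith [sq_nonneg r], le_rfl⟩
  | succ m _ ih =>
    obtain ⟨hlo, hhi⟩ := ih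
    have hr2 : r ^ 2 ≤ 1 := by nlinarith
    have hr3 : r ^ 3 = r * r ^ 2 := pow_succ' r 2
    rw [pow_succ' r m]
    constructor
    · nlinarith [mul_le_mul_of_nonpos_left hhi hr₀]
    · nlinarith [mul_le_mul_of_nonpos_left hlo hr₀, mul_le_mul_of_nonneg_left hr2 (sq_nonneg r)]

lemma neg_one_pow_mul_zpow_one_sub {K : Type*} [Field K] {x : K} (hx : x ≠ 0) (n : ℕ) :
    (-1) ^ n * x ^ ((1 : ℤ) - n) = x * (-x⁻¹) ^ n := by
  rw [zpow_sub₀ hx, zpow_one, zpow_natCast, neg_pow x⁻¹, inv_pow]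
  ring

lemma φ_eq_goldenRatio : φ = goldenRatio := rfl

lemma c_eq_two_div_four_add_goldenConj : c = 2 / (4 + goldenConj) := by
  rw [c, goldenConj, show (4 : ℝ) + (1 - √5) / 2 = (9 - √5) / 2 by ring, div_div_eq_mul_div]
  norm_num

lemma four_add_goldenConj_pos : 0 < 4 + goldenConj := by
  linarith [neg_one_lt_goldenConj]

lemma c_pos : 0 < c :=
  c_eq_two_div_four_add_goldenConj ▸ div_pos two_pos four_add_goldenConj_pos

lemma one_sub_three_mul_c_div_two :
    1 - 3 * c / 2 = c / 2 * (goldenConj ^ 3 - goldenConj) := by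
  have hc : c * (4 + goldenConj) = 2 := by
    rw [c_eq_two_div_four_add_goldenConj, div_mul_cancel₀ _ four_add_goldenConj_pos.ne']
  linear_combination (-1 / 2) * hc - c / 2 * (goldenConj + 1) * goldenConj_sq

lemma c_sub_eq_of_recurrence (y : ℕ → ℝ) (h1 : y 1 = c)
    (hrec : ∀ n : ℕ, 1 ≤ n →
      2 * y (n + 1) = 2 * y n + c * (-1 : ℝ) ^ n * φ ^ ((1 : ℤ) - (n : ℤ)))
    (n : ℕ) : c - y (n + 1) = c / 2 * (goldenConj ^ (n + 1) - goldenConj) := by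
  induction n with
  | zero => simp [h1]
  | succ n ih =>
    have hstep := hrec (n + 1) (by omega)
    rw [φ_eq_goldenRatio, mul_assoc, neg_one_pow_mul_zpow_one_sub goldenRatio_ne_zero,
      inv_goldenRatio, neg_neg] at hstep
    have hψ : goldenConj ^ (n + 1 + 1) = (1 - goldenRatio) * goldenConj ^ (n + 1) := by
      rw [one_sub_goldenConj, pow_succ']
    rw [hψ]
    linear_combination ih - hstep / 2

theorem stmt10_general (y : ℕ → ℝ) (h1 : y 1 = c)
    (hrec : ∀ n : ℕ, 1 ≤ n →
      2 * y (n + 1) = 2 * y n + c * (-1 : ℝ) ^ n * φ ^ ((1 : ℤ) - (n : ℤ)))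
    (n : ℕ) (hn : 1 ≤ n) :
    c - y (n + 1) ∈ Set.Icc (1 - 3 * c / 2) (c / 2) := by
  obtain ⟨hlo, hhi⟩ := pow_mem_Icc_of_neg_one_le_of_nonpos neg_one_lt_goldenConj.le
    goldenConj_neg.le (m := n + 1) (by omega)
  have hc : 0 ≤ c / 2 := (half_pos c_pos).le
  rw [c_sub_eq_of_recurrence y h1 hrec n]
  constructor
  · rw [one_sub_three_mul_c_div_two]
    gcongr
  · calc c / 2 * (goldenConj ^ (n + 1) - goldenConj)
        ≤ c / 2 * (goldenConj ^ 2 - goldenConj) := by gcongr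
      _ = c / 2 := by rw [goldenConj_sq]; ring

theorem stmt10 (y : ℕ → ℝ) (h1 : y 1 = c) (h2 : y 2 = c / 2)
    (hrec : ∀ n : ℕ, 1 ≤ n →
      2 * y (n + 1) = 2 * y n + c * (-1 : ℝ) ^ n * φ ^ ((1 : ℤ) - (n : ℤ)))
    (n : ℕ) (hn : 1 ≤ n) :
    c - y (n + 1) ∈ Set.Icc (1 - 3 * c / 2) (c / 2) :=
  stmt10_general y h1 hrec n hn
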